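/- The single layer heat potential decays like a Gaussian at spatial infinity: there exist constants C > 0 and c₀ > 0 (one may take c₀ = 1/(8T)) such that |v[μ](t,x)| ≤ C·exp(−c₀·dist(x,K)²) for all t ∈ [0,T] and all x ∈ ℝⁿ with dist(x,K) ≥ 1. In particular v[μ](t,x) → 0 as ‖x‖ → ∞, uniformly in t ∈ [0,T]. -/

import Mathlib

/-!
For `0 < s ≤ T` and `‖z‖ ≥ 1`, split the exponent of `S_n(s,z) = (4πs)^(-n/2) exp(-‖z‖²/(4s))`
into two halves `‖z‖²/(8s)`: the first is at least `1/(8s)`, and `exp(-1/(8s)) ≤ n! (8s)ⁿ` absorbs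
the singular factor `s^(-n/2)`; the second is at least `‖z‖²/(8T)`. Since `σ` is carried by `K` and
`‖x - y‖ ≥ dist(x,K)` for `y ∈ K`, integrating against the bounded density over `(0,t] × K` gives
the Gaussian decay. As `K` is bounded, `dist(x,K) ≥ ‖x‖ - r → ∞`.
-/

open Real MeasureTheory

/-- The fundamental solution of the heat equation in `ℝⁿ`. -/
noncomputable def Sn (n : ℕ) (t : ℝ) (x : EuclideanSpace ℝ (Fin n)) : ℝ :=
  if 0 < t then (4 * Real.pi * t) ^ (-(n : ℝ) / 2) * Real.exp (-‖x‖ ^ 2 / (4 * t)) else 0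

/-- The single layer heat potential `v[μ](t,x) = ∫₀ᵗ ∫ S_n(t−τ, x−y) μ(τ,y) dσ(y) dτ`. -/
noncomputable def singleLayer (n : ℕ) (σ : Measure (EuclideanSpace ℝ (Fin n)))
    (μ : ℝ → EuclideanSpace ℝ (Fin n) → ℝ) (t : ℝ) (x : EuclideanSpace ℝ (Fin n)) : ℝ :=
  ∫ τ in Set.Ioc (0 : ℝ) t, ∫ y, Sn n (t - τ) (x - y) * μ τ y ∂σ

open Filter Topology Nat

lemma Real.exp_neg_inv_le_factorial_mul_pow (n : ℕ) {u : ℝ} (hu : 0 < u) :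
    exp (-u⁻¹) ≤ n ! * u ^ n := by
  have hpos : 0 < u⁻¹ ^ n / n ! := by positivity
  calc exp (-u⁻¹) = (exp u⁻¹)⁻¹ := exp_neg _
    _ ≤ (u⁻¹ ^ n / n !)⁻¹ := inv_anti₀ hpos (pow_div_factorial_le_exp _ (inv_nonneg.2 hu.le) n)
    _ = n ! * u ^ n := by rw [inv_div, inv_pow, div_inv_eq_mul]

lemma Sn_nonneg (n : ℕ) (t : ℝ) (x : EuclideanSpace ℝ (Fin n)) : 0 ≤ Sn n t x := by
  unfold Sn
  split_ifs
  · positivity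
  · rfl

noncomputable def heatKernelTailConst (n : ℕ) (T : ℝ) : ℝ :=
  (4 * π) ^ (-(n : ℝ) / 2) * n ! * 8 ^ n * T ^ ((n : ℝ) / 2)

lemma heatKernelTailConst_nonneg (n : ℕ) {T : ℝ} (hT : 0 ≤ T) : 0 ≤ heatKernelTailConst n T := by
  unfold heatKernelTailConst
  positivity

lemma Sn_le_of_le_of_one_le_norm (n : ℕ) {s T : ℝ} (hT : 0 ≤ T) (hsT : s ≤ T)
    {z : EuclideanSpace ℝ (Fin n)} (hz : 1 ≤ ‖z‖) :
    Sn n s z ≤ heatKernelTailConst n T * exp (-(8 * T)⁻¹ * ‖z‖ ^ 2) := by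
  unfold Sn heatKernelTailConst
  split_ifs with hs
  swap
  · positivity
  have hsplit : exp (-‖z‖ ^ 2 / (4 * s)) ≤ exp (-(8 * s)⁻¹) * exp (-(8 * T)⁻¹ * ‖z‖ ^ 2) := by
    rw [← exp_add, exp_le_exp]
    have h1 : (8 * s)⁻¹ ≤ ‖z‖ ^ 2 / (8 * s) := by
      rw [inv_eq_one_div]; gcongr; nlinarith
    have h2 : (8 * T)⁻¹ * ‖z‖ ^ 2 ≤ ‖z‖ ^ 2 / (8 * s) := by
      rw [inv_mul_eq_div]; gcongr
    have h3 : ‖z‖ ^ 2 / (4 * s) = ‖z‖ ^ 2 / (8 * s) + ‖z‖ ^ 2 / (8 * s) := by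
      field_simp; ring
    rw [neg_div, h3]
    linarith
  have hpow : (4 * π * s) ^ (-(n : ℝ) / 2) * (n ! * (8 * s) ^ n)
      = (4 * π) ^ (-(n : ℝ) / 2) * n ! * 8 ^ n * s ^ ((n : ℝ) / 2) := by
    have : s ^ (-(n : ℝ) / 2) * s ^ n = s ^ ((n : ℝ) / 2) := by
      rw [← rpow_natCast, ← rpow_add hs]; ring_nf
    rw [mul_rpow (by positivity) hs.le, mul_pow, ← this]; ring
  calc (4 * π * s) ^ (-(n : ℝ) / 2) * exp (-‖z‖ ^ 2 / (4 * s))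
      ≤ (4 * π * s) ^ (-(n : ℝ) / 2) * ((n ! * (8 * s) ^ n) * exp (-(8 * T)⁻¹ * ‖z‖ ^ 2)) := by
        gcongr
        exact hsplit.trans (by gcongr; exact exp_neg_inv_le_factorial_mul_pow n (by positivity))
    _ = (4 * π) ^ (-(n : ℝ) / 2) * n ! * 8 ^ n * s ^ ((n : ℝ) / 2)
          * exp (-(8 * T)⁻¹ * ‖z‖ ^ 2) := by rw [← mul_assoc, hpow]
    _ ≤ _ := by gcongr

variable {n : ℕ} {σ : Measure (EuclideanSpace ℝ (Fin n))} {μ : ℝ → EuclideanSpace ℝ (Fin n) → ℝ}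

lemma abs_singleLayer_le [IsFiniteMeasure σ] {t B : ℝ} (ht : 0 ≤ t) (x : EuclideanSpace ℝ (Fin n))
    (hB : ∀ τ ∈ Set.Ioc 0 t, ∀ᵐ y ∂σ, |Sn n (t - τ) (x - y) * μ τ y| ≤ B) :
    |singleLayer n σ μ t x| ≤ σ.real Set.univ * B * t := by
  have hinner : ∀ τ ∈ Set.Ioc 0 t, ‖∫ y, Sn n (t - τ) (x - y) * μ τ y ∂σ‖ ≤ B * σ.real Set.univ :=
    fun τ hτ => norm_integral_le_of_norm_le_const (by simpa only [Real.norm_eq_abs] using hB τ hτ)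
  have := norm_setIntegral_le_of_norm_le_const (μ := volume) measure_Ioc_lt_top hinner
  rwa [Real.volume_real_Ioc_of_le ht, sub_zero, mul_comm B] at this

lemma abs_singleLayer_le_mul_exp [IsFiniteMeasure σ] {K : Set (EuclideanSpace ℝ (Fin n))}
    (hσK : ∀ᵐ y ∂σ, y ∈ K) {M : ℝ} (hμ : ∀ t x, |μ t x| ≤ M) {T t : ℝ} (ht : t ∈ Set.Icc 0 T)
    {x : EuclideanSpace ℝ (Fin n)} {d : ℝ} (hd : 1 ≤ d) (hdK : ∀ y ∈ K, d ≤ dist x y) :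
    |singleLayer n σ μ t x|
      ≤ σ.real Set.univ * M * T * heatKernelTailConst n T * exp (-(8 * T)⁻¹ * d ^ 2) := by
  have hT : 0 ≤ T := ht.1.trans ht.2
  have hM : 0 ≤ M := (abs_nonneg _).trans (hμ 0 0)
  have hA := heatKernelTailConst_nonneg n hT
  have hkernel : ∀ τ ∈ Set.Ioc 0 t, ∀ y ∈ K,
      Sn n (t - τ) (x - y) ≤ heatKernelTailConst n T * exp (-(8 * T)⁻¹ * d ^ 2) := by
    intro τ hτ y hy
    have hdxy : d ≤ ‖x - y‖ := dist_eq_norm x y ▸ hdK y hy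
    calc Sn n (t - τ) (x - y) ≤ heatKernelTailConst n T * exp (-(8 * T)⁻¹ * ‖x - y‖ ^ 2) :=
          Sn_le_of_le_of_one_le_norm n hT (by linarith [hτ.1, ht.2]) (hd.trans hdxy)
      _ ≤ heatKernelTailConst n T * exp (-(8 * T)⁻¹ * d ^ 2) := by
          gcongr heatKernelTailConst n T * exp ?_
          exact mul_le_mul_of_nonpos_left (by gcongr) (neg_nonpos.2 (by positivity))
  have hbound := abs_singleLayer_le (μ := μ) ht.1 x fun τ hτ => by
    filter_upwards [hσK] with y hy
    rw [abs_mul, abs_of_nonneg (Sn_nonneg _ _ _)]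
    exact mul_le_mul (hkernel τ hτ y hy) (hμ τ y) (abs_nonneg _) (by positivity)
  calc |singleLayer n σ μ t x| ≤ _ := hbound
    _ ≤ σ.real Set.univ * (heatKernelTailConst n T * exp (-(8 * T)⁻¹ * d ^ 2) * M) * T := by
        gcongr; exact ht.2
    _ = _ := by ring

lemma tendsto_exp_neg_mul_sq_atTop {c : ℝ} (hc : 0 < c) :
    Tendsto (fun d : ℝ => exp (-c * d ^ 2)) atTop (𝓝 0) :=
  tendsto_exp_atBot.comp <|
    (tendsto_pow_atTop two_ne_zero).const_mul_atTop_of_neg (neg_neg_of_pos hc)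

lemma ae_mem_of_eq_setOf_isOpen_ne_zero {X : Type*} [TopologicalSpace X] [MeasurableSpace X]
    [HereditarilyLindelofSpace X] {ν : Measure X} {K : Set X}
    (hK : K = {x | ∀ U : Set X, IsOpen U → x ∈ U → ν U ≠ 0}) : ∀ᵐ y ∂ν, y ∈ K := by
  have : K = ν.support := by
    rw [hK, Measure.support_eq_forall_isOpen]
    ext x
    simp only [Set.mem_ofPred_eq, pos_iff_ne_zero]
    exact forall_congr' fun U => imp.swap
  exact this ▸ Measure.support_mem_ae

theorem singleLayer_gaussian_decay_general (n : ℕ) (T : ℝ) (hT : 0 < T)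
    (σ : Measure (EuclideanSpace ℝ (Fin n))) [IsFiniteMeasure σ]
    (K : Set (EuclideanSpace ℝ (Fin n))) (hK : IsCompact K)
    (hKsupp : K = {x | ∀ U : Set (EuclideanSpace ℝ (Fin n)), IsOpen U → x ∈ U → σ U ≠ 0})
    (μ : ℝ → EuclideanSpace ℝ (Fin n) → ℝ)
    (M : ℝ) (hμbd : ∀ t x, |μ t x| ≤ M) :
    (∃ C : ℝ, 0 < C ∧ ∃ c₀ : ℝ, 0 < c₀ ∧
      ∀ t ∈ Set.Icc (0 : ℝ) T, ∀ x : EuclideanSpace ℝ (Fin n),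
        1 ≤ Metric.infDist x K →
        |singleLayer n σ μ t x| ≤ C * Real.exp (-c₀ * Metric.infDist x K ^ 2)) ∧
    (∀ ε : ℝ, 0 < ε → ∃ R : ℝ, ∀ x : EuclideanSpace ℝ (Fin n), R ≤ ‖x‖ →
      ∀ t ∈ Set.Icc (0 : ℝ) T, |singleLayer n σ μ t x| ≤ ε) := by
  have hσK := ae_mem_of_eq_setOf_isOpen_ne_zero hKsupp
  set C := max (σ.real Set.univ * M * T * heatKernelTailConst n T) 1
  have hc₀ : 0 < (8 * T)⁻¹ := by positivity
  have hdecay : ∀ t ∈ Set.Icc 0 T, ∀ x d, 1 ≤ d → (∀ y ∈ K, d ≤ dist x y) →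
      |singleLayer n σ μ t x| ≤ C * exp (-(8 * T)⁻¹ * d ^ 2) := fun t ht x d hd hdK =>
    (abs_singleLayer_le_mul_exp hσK hμbd ht hd hdK).trans (by gcongr; exact le_max_left _ _)
  refine ⟨⟨C, by positivity, _, hc₀, fun t ht x hx =>
    hdecay t ht x _ hx fun y hy => Metric.infDist_le_dist_of_mem hy⟩, fun ε hε => ?_⟩
  obtain ⟨r, hr⟩ := hK.isBounded.subset_closedBall 0
  obtain ⟨D, hD⟩ := eventually_atTop.1 <|
    ((tendsto_exp_neg_mul_sq_atTop hc₀).const_mul C).eventually (ge_mem_nhds (by simpa using hε))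
  refine ⟨r + max D 1, fun x hx t ht => hdecay t ht x (‖x‖ - r) ?_ (fun y hy => ?_) |>.trans ?_⟩
  · linarith [le_max_right D 1]
  · have hy' : ‖y‖ ≤ r := by simpa using hr hy
    linarith [norm_sub_norm_le x y, dist_eq_norm x y]
  · exact hD _ (by linarith [le_max_left D 1])

/-- The single layer heat potential decays like a Gaussian at spatial infinity: there are
constants `C > 0` and `c₀ > 0` such that `|v[μ](t,x)| ≤ C·exp(−c₀·dist(x,K)²)` whenever
`dist(x,K) ≥ 1`; in particular `v[μ](t,x) → 0` as `‖x‖ → ∞`, uniformly in `t ∈ [0,T]`. -/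
theorem singleLayer_gaussian_decay (n : ℕ) (hn : 2 ≤ n) (T : ℝ) (hT : 0 < T)
    (σ : Measure (EuclideanSpace ℝ (Fin n))) [IsFiniteMeasure σ]
    (K : Set (EuclideanSpace ℝ (Fin n))) (hK : IsCompact K)
    (hKsupp : K = {x | ∀ U : Set (EuclideanSpace ℝ (Fin n)), IsOpen U → x ∈ U → σ U ≠ 0})
    (μ : ℝ → EuclideanSpace ℝ (Fin n) → ℝ)
    (hμmeas : Measurable (Function.uncurry μ))
    (M : ℝ) (hμbd : ∀ t x, |μ t x| ≤ M) :
    (∃ C : ℝ, 0 < C ∧ ∃ c₀ : ℝ, 0 < c₀ ∧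
      ∀ t ∈ Set.Icc (0 : ℝ) T, ∀ x : EuclideanSpace ℝ (Fin n),
        1 ≤ Metric.infDist x K →
        |singleLayer n σ μ t x| ≤ C * Real.exp (-c₀ * Metric.infDist x K ^ 2)) ∧
    (∀ ε : ℝ, 0 < ε → ∃ R : ℝ, ∀ x : EuclideanSpace ℝ (Fin n), R ≤ ‖x‖ →
      ∀ t ∈ Set.Icc (0 : ℝ) T, |singleLayer n σ μ t x| ≤ ε) :=
  singleLayer_gaussian_decay_general n T hT σ K hK hKsupp μ M hμbd
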